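/- arXiv:1401.7511 — 4 statements merged into one kernel-verified Lean document; each statement's English description precedes it below -/
import Mathlib

section
/- Let G be a connected simple graph with n ≥ 2 vertices. Then M₂*(G) ≤ GA(G) ≤ (n−1)² · M₂*(G), with equality on the left if and only if G is isomorphic to the path P₂ (a single edge), and equality on the right if and only if G is isomorphic to the complete graph Kₙ. -/
open Finset SimpleGraph

variable {V : Type*} [Fintype V] [DecidableEq V]

/-- The sum-connectivity index `X(G) = Σ_{uv ∈ E(G)} 1/√(d_u + d_v)`. -/
noncomputable def sumConnIndex (G : SimpleGraph V) [DecidableRel G.Adj] : ℝ :=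
  ∑ e ∈ G.edgeFinset, Sym2.lift
    ⟨fun u v => 1 / Real.sqrt ((G.degree u : ℝ) + (G.degree v : ℝ)),
     fun u v => by dsimp only; rw [add_comm ((G.degree u : ℝ)) ((G.degree v : ℝ))]⟩ e

/-- The Randić index `R(G) = Σ_{uv ∈ E(G)} 1/√(d_u d_v)`. -/
noncomputable def randicIndex (G : SimpleGraph V) [DecidableRel G.Adj] : ℝ :=
  ∑ e ∈ G.edgeFinset, Sym2.lift
    ⟨fun u v => 1 / Real.sqrt ((G.degree u : ℝ) * (G.degree v : ℝ)),
     fun u v => by dsimp only; rw [mul_comm ((G.degree u : ℝ)) ((G.degree v : ℝ))]⟩ e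

/-- The harmonic index `H(G) = Σ_{uv ∈ E(G)} 2/(d_u + d_v)`. -/
noncomputable def harmonicIndex (G : SimpleGraph V) [DecidableRel G.Adj] : ℝ :=
  ∑ e ∈ G.edgeFinset, Sym2.lift
    ⟨fun u v => 2 / ((G.degree u : ℝ) + (G.degree v : ℝ)),
     fun u v => by dsimp only; rw [add_comm ((G.degree u : ℝ)) ((G.degree v : ℝ))]⟩ e

/-- The atom-bond connectivity index `ABC(G) = Σ_{uv ∈ E(G)} √((d_u + d_v − 2)/(d_u d_v))`. -/
noncomputable def abcIndex (G : SimpleGraph V) [DecidableRel G.Adj] : ℝ :=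
  ∑ e ∈ G.edgeFinset, Sym2.lift
    ⟨fun u v => Real.sqrt (((G.degree u : ℝ) + (G.degree v : ℝ) - 2) /
        ((G.degree u : ℝ) * (G.degree v : ℝ))),
     fun u v => by dsimp only; rw [add_comm ((G.degree u : ℝ)) ((G.degree v : ℝ)),
        mul_comm ((G.degree u : ℝ)) ((G.degree v : ℝ))]⟩ e

/-- The first geometric-arithmetic index `GA(G) = Σ_{uv ∈ E(G)} 2√(d_u d_v)/(d_u + d_v)`. -/
noncomputable def geoArithIndex (G : SimpleGraph V) [DecidableRel G.Adj] : ℝ :=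
  ∑ e ∈ G.edgeFinset, Sym2.lift
    ⟨fun u v => 2 * Real.sqrt ((G.degree u : ℝ) * (G.degree v : ℝ)) /
        ((G.degree u : ℝ) + (G.degree v : ℝ)),
     fun u v => by dsimp only; rw [mul_comm ((G.degree u : ℝ)) ((G.degree v : ℝ)),
        add_comm ((G.degree u : ℝ)) ((G.degree v : ℝ))]⟩ e

/-- The augmented Zagreb index `AZI(G) = Σ_{uv ∈ E(G)} (d_u d_v/(d_u + d_v − 2))³`. -/
noncomputable def augZagrebIndex (G : SimpleGraph V) [DecidableRel G.Adj] : ℝ :=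
  ∑ e ∈ G.edgeFinset, Sym2.lift
    ⟨fun u v => ((G.degree u : ℝ) * (G.degree v : ℝ) /
        ((G.degree u : ℝ) + (G.degree v : ℝ) - 2)) ^ 3,
     fun u v => by dsimp only; rw [mul_comm ((G.degree u : ℝ)) ((G.degree v : ℝ)),
        add_comm ((G.degree u : ℝ)) ((G.degree v : ℝ))]⟩ e

/-- The modified second Zagreb index `M₂*(G) = Σ_{uv ∈ E(G)} 1/(d_u d_v)`. -/
noncomputable def modSecondZagrebIndex (G : SimpleGraph V) [DecidableRel G.Adj] : ℝ :=
  ∑ e ∈ G.edgeFinset, Sym2.lift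
    ⟨fun u v => 1 / ((G.degree u : ℝ) * (G.degree v : ℝ)),
     fun u v => by dsimp only; rw [mul_comm ((G.degree u : ℝ)) ((G.degree v : ℝ))]⟩ e


lemma auxA {a b : ℝ} (ha : 1 ≤ a) (hb : 1 ≤ b) :
    1/(a*b) ≤ 2*Real.sqrt (a*b)/(a+b) ∧
    (1/(a*b) = 2*Real.sqrt (a*b)/(a+b) ↔ a = 1 ∧ b = 1) := by
  have hab : (1:ℝ) ≤ a*b := by nlinarith
  have habpos : (0:ℝ) < a*b := by linarith
  have hapb : (0:ℝ) < a+b := by linarith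
  have hs1 : 1 ≤ Real.sqrt (a*b) := Real.one_le_sqrt.2 hab
  have hs2 : Real.sqrt (a*b) ^ 2 = a*b := Real.sq_sqrt (le_of_lt habpos)
  set s := Real.sqrt (a*b) with hs
  constructor
  · rw [div_le_div_iff₀ habpos hapb]
    nlinarith [sq_nonneg (a-b), sq_nonneg (a*b - 1)]
  · constructor
    · intro h
      rw [div_eq_div_iff habpos.ne' hapb.ne'] at h
      have hs3 : s = 1 := by nlinarith
      constructor <;> nlinarith
    · rintro ⟨rfl, rfl⟩
      rw [hs]; norm_num

lemma auxB {a b c : ℝ} (ha : 1 ≤ a) (hb : 1 ≤ b) (hac : a ≤ c) (hbc : b ≤ c) :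
    2*Real.sqrt (a*b)/(a+b) ≤ c^2 * (1/(a*b)) ∧
    (2*Real.sqrt (a*b)/(a+b) = c^2 * (1/(a*b)) ↔ a = c ∧ b = c) := by
  have hc : (1:ℝ) ≤ c := le_trans ha hac
  have hab : (1:ℝ) ≤ a*b := by nlinarith
  have habpos : (0:ℝ) < a*b := by linarith
  have hapb : (0:ℝ) < a+b := by linarith
  have hs1 : 1 ≤ Real.sqrt (a*b) := Real.one_le_sqrt.2 hab
  have hs2 : Real.sqrt (a*b) ^ 2 = a*b := Real.sq_sqrt (le_of_lt habpos)
  have hsc : Real.sqrt (a*b) ≤ c := by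
    rw [show c = Real.sqrt (c^2) from (Real.sqrt_sq (by linarith)).symm]
    exact Real.sqrt_le_sqrt (by nlinarith)
  set s := Real.sqrt (a*b) with hs
  have key : 2*s/(a+b) ≤ c^2 * (1/(a*b)) ↔ 2*s*(a*b) ≤ c^2*(a+b) := by
    rw [mul_one_div, div_le_div_iff₀ hapb habpos]
  have keyeq : 2*s/(a+b) = c^2 * (1/(a*b)) ↔ 2*s*(a*b) = c^2*(a+b) := by
    rw [mul_one_div, div_eq_div_iff hapb.ne' habpos.ne']
  constructor
  · rw [key]
    nlinarith [mul_nonneg (sub_nonneg.2 hac) (by linarith : (0:ℝ) ≤ b),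
      mul_nonneg (sub_nonneg.2 hbc) (by linarith : (0:ℝ) ≤ a),
      mul_nonneg (sub_nonneg.2 hsc) (le_of_lt habpos)]
  · rw [keyeq]
    constructor
    · intro h
      have hsceq : s = c := by
        nlinarith [mul_nonneg (sub_nonneg.2 hac) (by linarith : (0:ℝ) ≤ b),
          mul_nonneg (sub_nonneg.2 hbc) (by linarith : (0:ℝ) ≤ a),
          mul_nonneg (sub_nonneg.2 hsc) (le_of_lt habpos)]
      have habc : a*b = c^2 := by nlinarith
      constructor <;> nlinarith
    · rintro ⟨rfl, rfl⟩
      rw [hs, Real.sqrt_mul_self (by linarith : (0:ℝ) ≤ b)]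
      ring

variable (G : SimpleGraph V) [DecidableRel G.Adj]

theorem stmt13 (hG : G.Connected) (n : ℕ) (hn : Fintype.card V = n) (hn2 : 2 ≤ n) :
    modSecondZagrebIndex G ≤ geoArithIndex G ∧
    geoArithIndex G ≤ ((n : ℝ) - 1) ^ 2 * modSecondZagrebIndex G ∧
    (modSecondZagrebIndex G = geoArithIndex G ↔ Nonempty (G ≃g pathGraph 2)) ∧
    (geoArithIndex G = ((n : ℝ) - 1) ^ 2 * modSecondZagrebIndex G ↔
      Nonempty (G ≃g completeGraph (Fin n))) := by
  classical
  -- basic facts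
  have hcard : 1 < Fintype.card V := by omega
  have hexadj : ∀ u : V, ∃ w, G.Adj u w := by
    intro u
    obtain ⟨w, hw⟩ := Fintype.exists_ne_of_one_lt_card hcard u
    obtain ⟨p⟩ := hG.preconnected u w
    cases p with
    | nil => exact (hw rfl).elim
    | cons h q => exact ⟨_, h⟩
  have hd1 : ∀ {u v : V}, G.Adj u v → 1 ≤ (G.degree u : ℝ) := by
    intro u v h
    have : 0 < G.degree u := (G.degree_pos_iff_exists_adj u).2 ⟨v, h⟩
    exact_mod_cast this
  have hdn : ∀ u : V, (G.degree u : ℝ) ≤ (n : ℝ) - 1 := by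
    intro u
    have h1 : G.degree u < Fintype.card V := G.degree_lt_card_verts u
    rw [hn] at h1
    have : (G.degree u : ℝ) + 1 ≤ (n : ℝ) := by exact_mod_cast h1
    linarith
  have hadj_of_mem : ∀ {u v : V}, s(u, v) ∈ G.edgeFinset → G.Adj u v := by
    intro u v h
    rwa [SimpleGraph.mem_edgeFinset, SimpleGraph.mem_edgeSet] at h
  -- termwise inequalities
  have hle1 : ∀ e ∈ G.edgeFinset,
      Sym2.lift ⟨fun u v => 1 / ((G.degree u : ℝ) * (G.degree v : ℝ)),
        fun u v => by dsimp only; rw [mul_comm ((G.degree u : ℝ)) ((G.degree v : ℝ))]⟩ e ≤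
      Sym2.lift ⟨fun u v => 2 * Real.sqrt ((G.degree u : ℝ) * (G.degree v : ℝ)) /
          ((G.degree u : ℝ) + (G.degree v : ℝ)),
        fun u v => by dsimp only; rw [mul_comm ((G.degree u : ℝ)) ((G.degree v : ℝ)),
          add_comm ((G.degree u : ℝ)) ((G.degree v : ℝ))]⟩ e := by
    intro e he
    induction e with
    | _ u v =>
      simp only [Sym2.lift_mk]
      exact (auxA (hd1 (hadj_of_mem he)) (hd1 (hadj_of_mem he).symm)).1
  have hle2 : ∀ e ∈ G.edgeFinset,
      Sym2.lift ⟨fun u v => 2 * Real.sqrt ((G.degree u : ℝ) * (G.degree v : ℝ)) /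
          ((G.degree u : ℝ) + (G.degree v : ℝ)),
        fun u v => by dsimp only; rw [mul_comm ((G.degree u : ℝ)) ((G.degree v : ℝ)),
          add_comm ((G.degree u : ℝ)) ((G.degree v : ℝ))]⟩ e ≤
      ((n : ℝ) - 1) ^ 2 *
      Sym2.lift ⟨fun u v => 1 / ((G.degree u : ℝ) * (G.degree v : ℝ)),
        fun u v => by dsimp only; rw [mul_comm ((G.degree u : ℝ)) ((G.degree v : ℝ))]⟩ e := by
    intro e he
    induction e with
    | _ u v =>
      simp only [Sym2.lift_mk]
      exact (auxB (hd1 (hadj_of_mem he)) (hd1 (hadj_of_mem he).symm) (hdn u) (hdn v)).1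
  have hsum1 : modSecondZagrebIndex G ≤ geoArithIndex G := Finset.sum_le_sum hle1
  have hsum2 : geoArithIndex G ≤ ((n : ℝ) - 1) ^ 2 * modSecondZagrebIndex G := by
    rw [modSecondZagrebIndex, Finset.mul_sum]
    exact Finset.sum_le_sum hle2
  refine ⟨hsum1, hsum2, ?_, ?_⟩
  · -- left equality case
    rw [modSecondZagrebIndex, geoArithIndex, Finset.sum_eq_sum_iff_of_le hle1]
    constructor
    · intro h
      -- pick an edge; its endpoints have degree 1
      obtain ⟨u⟩ : Nonempty V := Fintype.card_pos_iff.mp (by omega)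
      obtain ⟨v, hadj⟩ := hexadj u
      have hmem : s(u, v) ∈ G.edgeFinset := by
        rw [SimpleGraph.mem_edgeFinset, SimpleGraph.mem_edgeSet]; exact hadj
      have h1 := h _ hmem
      simp only [Sym2.lift_mk] at h1
      obtain ⟨hu1, hv1⟩ := (auxA (hd1 hadj) (hd1 hadj.symm)).2.1 h1
      have hdu : G.degree u = 1 := by exact_mod_cast hu1
      have hdv : G.degree v = 1 := by exact_mod_cast hv1
      -- unique neighbors
      have huniq : ∀ x y z : V, G.Adj x y → G.Adj x z → G.degree x = 1 → y = z := by
        intro x y z hy hz hx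
        have hcard1 : (G.neighborFinset x).card ≤ 1 := le_of_eq hx
        exact Finset.card_le_one.1 hcard1 y ((G.mem_neighborFinset x y).2 hy) z
          ((G.mem_neighborFinset x z).2 hz)
      -- all vertices are u or v
      have hwalk : ∀ (y x : V), G.Walk y x → (y = u ∨ y = v) → (x = u ∨ x = v) := by
        intro y x p
        induction p with
        | nil => exact id
        | cons hab q ih =>
          intro hy
          apply ih
          rcases hy with rfl | rfl
          · exact Or.inr (huniq _ v _ hadj hab hdu).symm
          · exact Or.inl (huniq _ u _ hadj.symm hab hdv).symm
      have hmemuv : ∀ x : V, x = u ∨ x = v := by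
        intro x
        obtain ⟨p⟩ := hG.preconnected u x
        exact hwalk u x p (Or.inl rfl)
      have hsub : (Finset.univ : Finset V) ⊆ {u, v} := by
        intro x _
        rcases hmemuv x with rfl | rfl <;> simp
      have hcard2 : Fintype.card V = 2 := by
        have h1 : Fintype.card V ≤ ({u, v} : Finset V).card := by
          rw [← Finset.card_univ]; exact Finset.card_le_card hsub
        have h2 : ({u, v} : Finset V).card ≤ 2 := Finset.card_insert_le u {v} |>.trans (by simp)
        omega
      have e : V ≃ Fin 2 := Fintype.equivFinOfCardEq hcard2
      refine ⟨⟨e, ?_⟩⟩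
      intro a b
      simp only [pathGraph_two_eq_top, SimpleGraph.top_adj, ne_eq,
        EmbeddingLike.apply_eq_iff_eq]
      constructor
      · intro hne
        rcases hmemuv a with rfl | rfl <;> rcases hmemuv b with rfl | rfl
        · exact (hne rfl).elim
        · exact hadj
        · exact hadj.symm
        · exact (hne rfl).elim
      · exact fun h => h.ne
    · rintro ⟨φ⟩
      have hadj_iff : ∀ x y : V, G.Adj x y ↔ x ≠ y := by
        intro x y
        constructor
        · exact fun h => h.ne
        · intro hne
          apply φ.map_rel_iff.1
          have hab : φ x ≠ φ y := fun h => hne (φ.toEquiv.injective h)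
          rw [SimpleGraph.pathGraph_adj]
          have h1 := (φ x).isLt
          have h2 := (φ y).isLt
          have h3 : (φ x).val ≠ (φ y).val := fun h => hab (Fin.ext h)
          omega
      have hcard2 : Fintype.card V = 2 := by
        rw [← Fintype.card_fin 2]; exact Fintype.card_congr φ.toEquiv
      have hdeg : ∀ x : V, G.degree x = 1 := by
        intro x
        have hnb : G.neighborFinset x = Finset.univ.erase x := by
          ext y
          simp only [SimpleGraph.mem_neighborFinset, Finset.mem_erase, Finset.mem_univ,
            and_true, hadj_iff]
          exact ⟨fun h => h.symm, fun h => h.symm⟩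
        rw [SimpleGraph.degree, hnb, Finset.card_erase_of_mem (Finset.mem_univ x),
          Finset.card_univ, hcard2]
      intro e he
      induction e with
      | _ u v =>
        simp only [Sym2.lift_mk, hdeg u, hdeg v, Nat.cast_one, mul_one, Real.sqrt_one]
        norm_num
  · -- right equality case
    rw [modSecondZagrebIndex, geoArithIndex, Finset.mul_sum,
      Finset.sum_eq_sum_iff_of_le hle2]
    constructor
    · intro h
      have hdeg : ∀ x : V, G.degree x = n - 1 := by
        intro x
        obtain ⟨y, hxy⟩ := hexadj x
        have hmem : s(x, y) ∈ G.edgeFinset := by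
          rw [SimpleGraph.mem_edgeFinset, SimpleGraph.mem_edgeSet]; exact hxy
        have h1 := h _ hmem
        simp only [Sym2.lift_mk] at h1
        obtain ⟨hx1, _⟩ := (auxB (hd1 hxy) (hd1 hxy.symm) (hdn x) (hdn y)).2.1 h1
        have : (G.degree x : ℝ) = ((n - 1 : ℕ) : ℝ) := by
          rw [hx1, Nat.cast_sub (by omega)]; norm_num
        exact_mod_cast this
      have hadj_iff : ∀ x y : V, x ≠ y → G.Adj x y := by
        intro x y hne
        have hnb : G.neighborFinset x = Finset.univ.erase x := by
          apply Finset.eq_of_subset_of_card_le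
          · intro z hz
            rw [SimpleGraph.mem_neighborFinset] at hz
            exact Finset.mem_erase.2 ⟨hz.ne', Finset.mem_univ z⟩
          · rw [Finset.card_erase_of_mem (Finset.mem_univ x), Finset.card_univ, hn,
              ← hdeg x]
            rfl
        have : y ∈ G.neighborFinset x := by
          rw [hnb]; exact Finset.mem_erase.2 ⟨hne.symm, Finset.mem_univ y⟩
        rwa [SimpleGraph.mem_neighborFinset] at this
      have e : V ≃ Fin n := Fintype.equivFinOfCardEq hn
      refine ⟨⟨e, ?_⟩⟩
      intro a b
      simp only [completeGraph, SimpleGraph.top_adj, ne_eq, EmbeddingLike.apply_eq_iff_eq]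
      exact ⟨fun h => hadj_iff a b h, fun h => h.ne⟩
    · rintro ⟨φ⟩
      have hadj_iff : ∀ x y : V, G.Adj x y ↔ x ≠ y := by
        intro x y
        rw [← φ.map_rel_iff]
        simp only [completeGraph, SimpleGraph.top_adj, ne_eq, EmbeddingLike.apply_eq_iff_eq]
      have hdeg : ∀ x : V, (G.degree x : ℝ) = (n : ℝ) - 1 := by
        intro x
        have hnb : G.neighborFinset x = Finset.univ.erase x := by
          ext y
          simp only [SimpleGraph.mem_neighborFinset, Finset.mem_erase, Finset.mem_univ,
            and_true, hadj_iff]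
          exact ⟨fun h => h.symm, fun h => h.symm⟩
        have : G.degree x = n - 1 := by
          rw [SimpleGraph.degree, hnb, Finset.card_erase_of_mem (Finset.mem_univ x),
            Finset.card_univ, hn]
        rw [this, Nat.cast_sub (by omega)]; norm_num
      intro e he
      induction e with
      | _ u v =>
        simp only [Sym2.lift_mk, hdeg u, hdeg v]
        have hnR : (2:ℝ) ≤ (n:ℝ) := by exact_mod_cast hn2
        exact (auxB (by linarith : 1 ≤ (n:ℝ)-1) (by linarith) le_rfl le_rfl).2.mpr ⟨rfl, rfl⟩
end

section
/- Let G be a connected simple graph with n ≥ 3 vertices. Then √2 · M₂*(G) ≤ ABC(G) ≤ (n−1)√(2(n−2)) · M₂*(G), with equality on the left if and only if G is isomorphic to the path P₃, and equality on the right if and only if G is isomorphic to the complete graph Kₙ. -/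
open Finset SimpleGraph

variable {V : Type*} [Fintype V] [DecidableEq V]

/-! Writing `P = d_u d_v (d_u + d_v - 2)`, every ABC term is `√P / (d_u d_v)`, that is `√P`
times the corresponding M₂* term, so both bounds hold edge by edge as soon as
`2 ≤ P ≤ (n - 1)² · 2(n - 2)`. The upper bound holds because degrees are below `n`; the lower one
because an edge with `d_u = d_v = 1` would be a whole component. Equality on the left forces
`d_u + d_v = 3` on every edge, so some vertex of degree 2 has two leaves as neighbours and by
connectivity these three vertices are the whole graph; equality on the right forces both ends of
every edge to be universal, so the graph is complete. -/

lemma Real.sqrt_div_eq_sqrt_mul_mul_one_div (s : ℝ) {x : ℝ} (hx : 0 ≤ x) :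
    √(s / x) = √(x * s) * (1 / x) := by
  rcases hx.eq_or_lt with rfl | hx
  · simp
  rw [Real.sqrt_div' _ hx.le, Real.sqrt_mul hx.le]
  field_simp
  rw [Real.sq_sqrt hx.le]

lemma sqrt_add_sub_two_div_mul (a b : ℕ) :
    √(((a : ℝ) + b - 2) / (a * b)) = √((a : ℝ) * b * (a + b - 2)) * (1 / (a * b)) :=
  Real.sqrt_div_eq_sqrt_mul_mul_one_div _ (by positivity)

lemma sub_one_mul_sqrt_eq_sqrt {x : ℝ} (hx : 1 ≤ x) :
    (x - 1) * √(2 * (x - 2)) = √((x - 1) ^ 2 * (2 * (x - 2))) := by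
  rw [Real.sqrt_mul (sq_nonneg _), Real.sqrt_sq (by linarith)]

section DegreeTerms

variable {a b N : ℕ}

lemma two_le_natCast_mul_mul_add_sub_two (ha : 1 ≤ a) (hb : 1 ≤ b) (hab : 3 ≤ a + b) :
    2 ≤ (a : ℝ) * b * (a + b - 2) := by
  have ha' : (1 : ℝ) ≤ a := by exact_mod_cast ha
  have hb' : (1 : ℝ) ≤ b := by exact_mod_cast hb
  have hab' : (3 : ℝ) ≤ a + b := by exact_mod_cast hab
  nlinarith [mul_nonneg (sub_nonneg.2 ha') (sub_nonneg.2 hb')]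

lemma natCast_mul_mul_add_sub_two_eq_two_iff (ha : 1 ≤ a) (hb : 1 ≤ b) :
    (a : ℝ) * b * (a + b - 2) = 2 ↔ a + b = 3 := by
  constructor
  · intro h
    by_contra hne
    rcases (show a + b ≤ 2 ∨ 4 ≤ a + b by omega) with hle | hge
    · obtain ⟨rfl, rfl⟩ : a = 1 ∧ b = 1 := by omega
      norm_num at h
    · have hge' : (4 : ℝ) ≤ a + b := by exact_mod_cast hge
      have ha' : (1 : ℝ) ≤ a := by exact_mod_cast ha
      have hb' : (1 : ℝ) ≤ b := by exact_mod_cast hb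
      nlinarith [mul_nonneg (sub_nonneg.2 ha') (sub_nonneg.2 hb')]
  · intro h
    obtain ⟨rfl, rfl⟩ | ⟨rfl, rfl⟩ : (a = 1 ∧ b = 2) ∨ (a = 2 ∧ b = 1) := by omega
    all_goals norm_num

lemma natCast_mul_mul_add_sub_two_le (ha : 1 ≤ a) (hb : 1 ≤ b) (haN : a < N)
    (hbN : b < N) : (a : ℝ) * b * (a + b - 2) ≤ (N - 1) ^ 2 * (2 * (N - 2)) := by
  have haN' : (a : ℝ) + 1 ≤ N := by exact_mod_cast haN
  have hbN' : (b : ℝ) + 1 ≤ N := by exact_mod_cast hbN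
  have ha' : (1 : ℝ) ≤ a := by exact_mod_cast ha
  have hb' : (1 : ℝ) ≤ b := by exact_mod_cast hb
  have hab : (a : ℝ) * b ≤ (N - 1) ^ 2 := by nlinarith
  nlinarith [mul_le_mul hab (show (a : ℝ) + b - 2 ≤ 2 * (N - 2) by linarith) (by linarith)
    (sq_nonneg _)]

lemma natCast_mul_mul_add_sub_two_eq_iff (ha : 1 ≤ a) (hb : 1 ≤ b) (haN : a < N)
    (hbN : b < N) :
    (a : ℝ) * b * (a + b - 2) = (N - 1) ^ 2 * (2 * (N - 2)) ↔ a = N - 1 ∧ b = N - 1 := by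
  constructor
  · intro h
    by_contra hne
    have hlt : (a : ℝ) + 2 ≤ N ∨ (b : ℝ) + 2 ≤ N := by
      rw [← Nat.cast_ofNat, ← Nat.cast_add, ← Nat.cast_add, Nat.cast_le, Nat.cast_le]; omega
    have haN' : (a : ℝ) + 1 ≤ N := by exact_mod_cast haN
    have hbN' : (b : ℝ) + 1 ≤ N := by exact_mod_cast hbN
    have ha' : (1 : ℝ) ≤ a := by exact_mod_cast ha
    have hb' : (1 : ℝ) ≤ b := by exact_mod_cast hb
    have hN : (0 : ℝ) < N - 2 := by
      rcases hlt with hlt | hlt <;> linarith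
    have hab : (a : ℝ) * b < (N - 1) ^ 2 := by
      rcases hlt with hlt | hlt <;> nlinarith
    have : (a : ℝ) * b * (a + b - 2) < (N - 1) ^ 2 * (2 * (N - 2)) :=
      calc (a : ℝ) * b * (a + b - 2) ≤ a * b * (2 * (N - 2)) := by gcongr; linarith
        _ < (N - 1) ^ 2 * (2 * (N - 2)) := by gcongr
    exact this.ne h
  · rintro ⟨rfl, rfl⟩
    rw [Nat.cast_sub (ha.trans_lt haN).le]
    ring

lemma sqrt_two_mul_one_div_le_sqrt (ha : 1 ≤ a) (hb : 1 ≤ b) (hab : 3 ≤ a + b) :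
    √2 * (1 / ((a : ℝ) * b)) ≤ √(((a : ℝ) + b - 2) / (a * b)) := by
  rw [sqrt_add_sub_two_div_mul, mul_le_mul_iff_left₀ (by positivity)]
  exact Real.sqrt_le_sqrt (two_le_natCast_mul_mul_add_sub_two ha hb hab)

lemma sqrt_two_mul_one_div_eq_sqrt_iff (ha : 1 ≤ a) (hb : 1 ≤ b) (hab : 3 ≤ a + b) :
    √2 * (1 / ((a : ℝ) * b)) = √(((a : ℝ) + b - 2) / (a * b)) ↔ a + b = 3 := by
  rw [sqrt_add_sub_two_div_mul, mul_left_inj' (by positivity),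
    Real.sqrt_inj zero_le_two (zero_le_two.trans (two_le_natCast_mul_mul_add_sub_two ha hb hab)),
    eq_comm, natCast_mul_mul_add_sub_two_eq_two_iff ha hb]

lemma sqrt_le_sub_one_mul_sqrt_mul_one_div (ha : 1 ≤ a) (hb : 1 ≤ b) (haN : a < N)
    (hbN : b < N) :
    √(((a : ℝ) + b - 2) / (a * b)) ≤ ((N : ℝ) - 1) * √(2 * ((N : ℝ) - 2)) * (1 / (a * b)) := by
  rw [sqrt_add_sub_two_div_mul, mul_le_mul_iff_left₀ (by positivity),
    sub_one_mul_sqrt_eq_sqrt (by exact_mod_cast (ha.trans_lt haN).le)]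
  exact Real.sqrt_le_sqrt (natCast_mul_mul_add_sub_two_le ha hb haN hbN)

lemma sqrt_eq_sub_one_mul_sqrt_mul_one_div_iff (ha : 1 ≤ a) (hb : 1 ≤ b) (haN : a < N)
    (hbN : b < N) :
    √(((a : ℝ) + b - 2) / (a * b)) = ((N : ℝ) - 1) * √(2 * ((N : ℝ) - 2)) * (1 / (a * b)) ↔
      a = N - 1 ∧ b = N - 1 := by
  have hP : (0 : ℝ) ≤ a * b * (a + b - 2) := by
    have : (2 : ℝ) ≤ a + b := by exact_mod_cast Nat.add_le_add ha hb
    exact mul_nonneg (by positivity) (by linarith)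
  rw [sqrt_add_sub_two_div_mul, mul_left_inj' (by positivity),
    sub_one_mul_sqrt_eq_sqrt (by exact_mod_cast (ha.trans_lt haN).le),
    Real.sqrt_inj hP (hP.trans (natCast_mul_mul_add_sub_two_le ha hb haN hbN)),
    natCast_mul_mul_add_sub_two_eq_iff ha hb haN hbN]

end DegreeTerms

namespace SimpleGraph

section EdgeSums

variable {V : Type*} (G : SimpleGraph V) [Fintype G.edgeSet]

lemma forall_mem_edgeFinset_iff {p : Sym2 V → Prop} :
    (∀ e ∈ G.edgeFinset, p e) ↔ ∀ u v, G.Adj u v → p s(u, v) :=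
  ⟨fun h u v huv => h _ (mem_edgeFinset.mpr huv), fun h e he => by
    induction e using Sym2.ind with | _ u v => exact h u v (mem_edgeFinset.mp he)⟩

variable {f g : Sym2 V → ℝ}

lemma sum_edgeFinset_le_sum_edgeFinset (h : ∀ u v, G.Adj u v → f s(u, v) ≤ g s(u, v)) :
    ∑ e ∈ G.edgeFinset, f e ≤ ∑ e ∈ G.edgeFinset, g e :=
  Finset.sum_le_sum (G.forall_mem_edgeFinset_iff.mpr h)

lemma sum_edgeFinset_eq_sum_edgeFinset_iff (h : ∀ u v, G.Adj u v → f s(u, v) ≤ g s(u, v)) :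
    ∑ e ∈ G.edgeFinset, f e = ∑ e ∈ G.edgeFinset, g e ↔
      ∀ u v, G.Adj u v → f s(u, v) = g s(u, v) := by
  rw [Finset.sum_eq_sum_iff_of_le (G.forall_mem_edgeFinset_iff.mpr h), forall_mem_edgeFinset_iff]

end EdgeSums

variable {V : Type*} {G : SimpleGraph V}

lemma Preconnected.mem_of_forall_adj_mem (hG : G.Preconnected) {s : Set V}
    (hs : ∀ ⦃a b⦄, a ∈ s → G.Adj a b → b ∈ s) {a : V} (ha : a ∈ s) (b : V) : b ∈ s := by
  obtain ⟨p⟩ := hG a b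
  induction p with
  | nil => exact ha
  | cons h _ ih => exact ih (hs ha h)

lemma eq_of_adj_of_degree_eq_one {u v w : V} [Fintype (G.neighborSet u)] (hu : G.degree u = 1)
    (hv : G.Adj u v) (hw : G.Adj u w) : v = w :=
  (degree_eq_one_iff_existsUnique_adj.mp hu).unique hv hw

lemma Connected.three_le_degree_add_degree [Fintype V] [DecidableRel G.Adj] (hG : G.Connected)
    (hV : 3 ≤ Fintype.card V) {u v : V} (huv : G.Adj u v) : 3 ≤ G.degree u + G.degree v := by
  by_contra! hlt
  obtain ⟨hu, hv⟩ : G.degree u = 1 ∧ G.degree v = 1 := by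
    have := huv.degree_pos_left
    have := huv.degree_pos_right
    omega
  have hclosed : ∀ ⦃a b⦄, a ∈ ({u, v} : Set V) → G.Adj a b → b ∈ ({u, v} : Set V) := by
    rintro a b (rfl | rfl) hab
    · exact .inr (eq_of_adj_of_degree_eq_one hu hab huv)
    · exact .inl (eq_of_adj_of_degree_eq_one hv hab huv.symm)
  classical
  have huniv : (Finset.univ : Finset V) ⊆ {u, v} := fun x _ => by
    simpa using hG.preconnected.mem_of_forall_adj_mem hclosed (Set.mem_insert u _) x
  have := (Finset.card_le_card huniv).trans Finset.card_le_two
  simp only [Finset.card_univ] at this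
  omega

instance (n : ℕ) : DecidableRel (pathGraph n).Adj :=
  fun _ _ => decidable_of_iff _ pathGraph_adj.symm

lemma pathGraph_three_degree_add_degree :
    ∀ i j : Fin 3, (pathGraph 3).Adj i j → (pathGraph 3).degree i + (pathGraph 3).degree j = 3 := by
  decide

lemma Iso.degree_add_degree_eq_three [Fintype V] [DecidableRel G.Adj] (φ : G ≃g pathGraph 3)
    {u v : V} (huv : G.Adj u v) : G.degree u + G.degree v = 3 := by
  rw [← φ.degree_eq u, ← φ.degree_eq v]
  exact pathGraph_three_degree_add_degree _ _ (φ.map_adj_iff.mpr huv)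

lemma nonempty_iso_pathGraph_three {u v w : V} (huv : G.Adj u v) (hvw : G.Adj v w)
    (huw : ¬G.Adj u w) (hne : u ≠ w) (hV : ∀ x, x = u ∨ x = v ∨ x = w) :
    Nonempty (G ≃g pathGraph 3) := by
  let f : Fin 3 → V := ![u, v, w]
  have hf : f.Bijective := by
    refine ⟨fun i j hij => ?_, fun x => ?_⟩
    · fin_cases i <;> fin_cases j <;>
        simp_all [f, huv.ne, hvw.ne, huv.ne.symm, hvw.ne.symm, hne.symm]
    · rcases hV x with rfl | rfl | rfl
      exacts [⟨0, rfl⟩, ⟨1, rfl⟩, ⟨2, rfl⟩]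
  have hwu : ¬G.Adj w u := fun h => huw h.symm
  refine ⟨(RelIso.mk (Equiv.ofBijective f hf) fun {i j} => ?_).symm⟩
  fin_cases i <;> fin_cases j <;>
    simp [f, pathGraph_adj, huv, hvw, huw, huv.symm, hvw.symm, hwu]

lemma Connected.nonempty_iso_pathGraph_three_of_degree_add_degree [Fintype V] [DecidableRel G.Adj]
    [Nontrivial V] (hG : G.Connected) (h : ∀ u v, G.Adj u v → G.degree u + G.degree v = 3) :
    Nonempty (G ≃g pathGraph 3) := by
  classical
  obtain ⟨v, hv⟩ : ∃ v, G.degree v = 2 := by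
    obtain ⟨x⟩ := ‹Nontrivial V›.to_nonempty
    obtain ⟨y, hxy⟩ := hG.preconnected.exists_adj_of_nontrivial x
    have := h x y hxy
    have := hxy.degree_pos_left
    have := hxy.degree_pos_right
    by_cases hx : G.degree x = 2
    exacts [⟨x, hx⟩, ⟨y, by omega⟩]
  obtain ⟨u, w, hne, hvuw⟩ := Finset.card_eq_two.mp ((G.card_neighborFinset_eq_degree v).trans hv)
  have hvu : G.Adj v u := (G.mem_neighborFinset v u).mp (by simp [hvuw])
  have hvw : G.Adj v w := (G.mem_neighborFinset v w).mp (by simp [hvuw])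
  have hu : G.degree u = 1 := by have := h v u hvu; omega
  have hw : G.degree w = 1 := by have := h v w hvw; omega
  have hnbr : ∀ ⦃x⦄, G.Adj v x → x = u ∨ x = w := fun x hx => by
    simpa [hvuw] using (G.mem_neighborFinset v x).mpr hx
  have hclosed : ∀ ⦃a b⦄, a ∈ ({u, v, w} : Set V) → G.Adj a b → b ∈ ({u, v, w} : Set V) := by
    rintro a b (rfl | rfl | rfl) hab
    · exact .inr (.inl (eq_of_adj_of_degree_eq_one hu hab hvu.symm))
    · rcases hnbr hab with rfl | rfl <;> simp
    · exact .inr (.inl (eq_of_adj_of_degree_eq_one hw hab hvw.symm))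
  refine nonempty_iso_pathGraph_three hvu.symm hvw (fun huw => ?_) hne
    (hG.preconnected.mem_of_forall_adj_mem hclosed (Set.mem_insert u _))
  exact hvw.ne (eq_of_adj_of_degree_eq_one hu hvu.symm huw)

lemma nonempty_iso_completeGraph_iff [Fintype V] {n : ℕ} (hn : Fintype.card V = n) :
    Nonempty (G ≃g completeGraph (Fin n)) ↔ G = ⊤ := by
  refine ⟨fun ⟨φ⟩ => ?_, ?_⟩
  · ext u w
    rw [← φ.map_adj_iff]
    simp [φ.injective.ne_iff]
  · rintro rfl
    exact ⟨Iso.completeGraph (Fintype.equivFinOfCardEq hn)⟩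

lemma Preconnected.eq_top_iff_forall_adj_isUniversal [Nontrivial V] (hG : G.Preconnected) :
    G = ⊤ ↔ ∀ u v, G.Adj u v → G.IsUniversal u ∧ G.IsUniversal v := by
  rw [eq_top_iff_forall_isUniversal]
  refine ⟨fun h u v _ => ⟨h u, h v⟩, fun h u => ?_⟩
  obtain ⟨v, huv⟩ := hG.exists_adj_of_nontrivial u
  exact (h u v huv).1

end SimpleGraph

section Indices

variable {V : Type*} [Fintype V] (G : SimpleGraph V) [DecidableRel G.Adj]

theorem sqrt_two_mul_modSecondZagrebIndex_le_abcIndex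
    (h : ∀ u v, G.Adj u v → 3 ≤ G.degree u + G.degree v) :
    √2 * modSecondZagrebIndex G ≤ abcIndex G := by
  rw [modSecondZagrebIndex, abcIndex, Finset.mul_sum]
  refine G.sum_edgeFinset_le_sum_edgeFinset fun u v huv => ?_
  exact sqrt_two_mul_one_div_le_sqrt huv.degree_pos_left huv.degree_pos_right (h u v huv)

theorem sqrt_two_mul_modSecondZagrebIndex_eq_abcIndex_iff
    (h : ∀ u v, G.Adj u v → 3 ≤ G.degree u + G.degree v) :
    √2 * modSecondZagrebIndex G = abcIndex G ↔
      ∀ u v, G.Adj u v → G.degree u + G.degree v = 3 := by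
  rw [modSecondZagrebIndex, abcIndex, Finset.mul_sum, G.sum_edgeFinset_eq_sum_edgeFinset_iff
    fun u v huv => sqrt_two_mul_one_div_le_sqrt huv.degree_pos_left huv.degree_pos_right
      (h u v huv)]
  refine forall₃_congr fun u v huv => ?_
  exact sqrt_two_mul_one_div_eq_sqrt_iff huv.degree_pos_left huv.degree_pos_right (h u v huv)

theorem abcIndex_le :
    abcIndex G ≤ ((Fintype.card V : ℝ) - 1) * √(2 * ((Fintype.card V : ℝ) - 2)) *
      modSecondZagrebIndex G := by
  rw [modSecondZagrebIndex, abcIndex, Finset.mul_sum]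
  refine G.sum_edgeFinset_le_sum_edgeFinset fun u v huv => ?_
  exact sqrt_le_sub_one_mul_sqrt_mul_one_div huv.degree_pos_left huv.degree_pos_right
    (G.degree_lt_card_verts u) (G.degree_lt_card_verts v)

theorem abcIndex_eq_iff :
    abcIndex G = ((Fintype.card V : ℝ) - 1) * √(2 * ((Fintype.card V : ℝ) - 2)) *
      modSecondZagrebIndex G ↔ ∀ u v, G.Adj u v → G.IsUniversal u ∧ G.IsUniversal v := by
  rw [modSecondZagrebIndex, abcIndex, Finset.mul_sum, G.sum_edgeFinset_eq_sum_edgeFinset_iff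
    fun u v huv => sqrt_le_sub_one_mul_sqrt_mul_one_div huv.degree_pos_left huv.degree_pos_right
      (G.degree_lt_card_verts u) (G.degree_lt_card_verts v)]
  refine forall₃_congr fun u v huv => ?_
  rw [← G.degree_eq_card_sub_one, ← G.degree_eq_card_sub_one]
  exact sqrt_eq_sub_one_mul_sqrt_mul_one_div_iff huv.degree_pos_left huv.degree_pos_right
    (G.degree_lt_card_verts u) (G.degree_lt_card_verts v)

end Indices

variable (G : SimpleGraph V) [DecidableRel G.Adj]

theorem stmt14 (hG : G.Connected) (n : ℕ) (hn : Fintype.card V = n) (hn3 : 3 ≤ n) :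
    Real.sqrt 2 * modSecondZagrebIndex G ≤ abcIndex G ∧
    abcIndex G ≤ ((n : ℝ) - 1) * Real.sqrt (2 * ((n : ℝ) - 2)) * modSecondZagrebIndex G ∧
    (Real.sqrt 2 * modSecondZagrebIndex G = abcIndex G ↔
      Nonempty (G ≃g pathGraph 3)) ∧
    (abcIndex G = ((n : ℝ) - 1) * Real.sqrt (2 * ((n : ℝ) - 2)) * modSecondZagrebIndex G ↔
      Nonempty (G ≃g completeGraph (Fin n))) := by
  have : Nontrivial V := Fintype.one_lt_card_iff_nontrivial.mp (by omega)
  have h3 : ∀ u v, G.Adj u v → 3 ≤ G.degree u + G.degree v := fun u v huv =>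
    hG.three_le_degree_add_degree (by omega) huv
  subst hn
  refine ⟨sqrt_two_mul_modSecondZagrebIndex_le_abcIndex G h3, abcIndex_le G, ?_, ?_⟩
  · rw [sqrt_two_mul_modSecondZagrebIndex_eq_abcIndex_iff G h3]
    exact ⟨hG.nonempty_iso_pathGraph_three_of_degree_add_degree,
      fun ⟨φ⟩ _ _ huv => φ.degree_add_degree_eq_three huv⟩
  · rw [abcIndex_eq_iff, SimpleGraph.nonempty_iso_completeGraph_iff rfl,
      hG.preconnected.eq_top_iff_forall_adj_isUniversal]
end

section
/- Let G be a connected simple graph with minimum degree δ ≥ 2. Then (δ^(13/2)/(√32 · (δ−1)³)) · X(G) ≤ AZI(G), with equality if and only if G is a δ-regular graph. -/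
open Finset SimpleGraph

variable {V : Type*} [Fintype V] [DecidableEq V]

section EdgeSums

variable {α : Type*} (G : SimpleGraph α) [Fintype G.edgeSet] {f g : Sym2 α → ℝ}

lemma SimpleGraph.forall_mem_edgeFinset_of_adj {p : Sym2 α → Prop}
    (h : ∀ u v, G.Adj u v → p s(u, v)) : ∀ e ∈ G.edgeFinset, p e := by
  intro e he
  induction e using Sym2.ind with
  | _ u v => exact h u v (G.mem_edgeFinset.mp he)

lemma SimpleGraph.sum_edgeFinset_le (hle : ∀ u v, G.Adj u v → f s(u, v) ≤ g s(u, v)) :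
    ∑ e ∈ G.edgeFinset, f e ≤ ∑ e ∈ G.edgeFinset, g e :=
  Finset.sum_le_sum (G.forall_mem_edgeFinset_of_adj hle)

lemma SimpleGraph.sum_edgeFinset_eq_iff (P : α → Prop) (hadj : ∀ v, ∃ w, G.Adj v w)
    (hle : ∀ u v, G.Adj u v → f s(u, v) ≤ g s(u, v))
    (heq : ∀ u v, G.Adj u v → (f s(u, v) = g s(u, v) ↔ P u ∧ P v)) :
    ∑ e ∈ G.edgeFinset, f e = ∑ e ∈ G.edgeFinset, g e ↔ ∀ v, P v := by
  rw [Finset.sum_eq_sum_iff_of_le (G.forall_mem_edgeFinset_of_adj hle)]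
  constructor
  · intro h v
    obtain ⟨w, hvw⟩ := hadj v
    exact ((heq v w hvw).mp (h _ (G.mem_edgeFinset.mpr hvw))).1
  · exact fun hP => G.forall_mem_edgeFinset_of_adj fun u v huv =>
      (heq u v huv).mpr ⟨hP u, hP v⟩

end EdgeSums

section EdgeBound

variable {δ x y : ℝ}

/-- The constant is the ratio of the two edge contributions `(δ²/(2δ-2))³` and `1/√(2δ)` of an
edge joining two vertices of degree `δ`. -/
lemma rpow_div_sqrt_mul_pow_eq (hδ : 1 < δ) :
    δ ^ ((13 : ℝ) / 2) / (√32 * (δ - 1) ^ 3) = (δ ^ 2 / (2 * δ - 2)) ^ 3 * √(2 * δ) := by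
  have hsqrt32 : √32 = 4 * √2 := by
    rw [show (32 : ℝ) = 4 ^ 2 * 2 by norm_num, Real.sqrt_mul (by norm_num),
      Real.sqrt_sq (by norm_num)]
  have hrpow : δ ^ ((13 : ℝ) / 2) = δ ^ 6 * √δ := by
    rw [Real.sqrt_eq_rpow, ← Real.rpow_natCast, ← Real.rpow_add (by linarith)]
    norm_num
  have hsqrt2 : √2 ^ 2 = 2 := Real.sq_sqrt (by norm_num)
  have : 0 < √2 := by positivity
  have : δ - 1 ≠ 0 := by linarith
  have : 2 * δ - 2 ≠ 0 := by linarith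
  rw [hsqrt32, hrpow, Real.sqrt_mul (by norm_num)]
  field_simp
  linear_combination (-4) * hsqrt2

lemma sq_div_le_mul_div (hδ : 2 ≤ δ) (hx : δ ≤ x) (hy : δ ≤ y) :
    δ ^ 2 / (2 * δ - 2) ≤ x * y / (x + y - 2) := by
  rw [div_le_div_iff₀ (by linarith) (by linarith)]
  nlinarith [mul_nonneg (sub_nonneg.mpr hx) (sub_nonneg.mpr hy),
    mul_nonneg (sub_nonneg.mpr hx) (sub_nonneg.mpr hδ),
    mul_nonneg (sub_nonneg.mpr hy) (sub_nonneg.mpr hδ)]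

/-- `1/√(x+y) ≤ 1/√(2δ)` with equality only for `x + y = 2δ`, and `xy/(x+y-2)` is at least its
value `δ²/(2δ-2)` at `x = y = δ`. -/
lemma mul_one_div_sqrt_le_pow (hδ : 2 ≤ δ) (hx : δ ≤ x) (hy : δ ≤ y) :
    δ ^ ((13 : ℝ) / 2) / (√32 * (δ - 1) ^ 3) * (1 / √(x + y)) ≤ (x * y / (x + y - 2)) ^ 3 ∧
    (δ ^ ((13 : ℝ) / 2) / (√32 * (δ - 1) ^ 3) * (1 / √(x + y)) = (x * y / (x + y - 2)) ^ 3 ↔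
      x = δ ∧ y = δ) := by
  set A := δ ^ 2 / (2 * δ - 2)
  have hA : 0 < A := div_pos (by positivity) (by linarith)
  have hsqrt : 0 < √(x + y) := Real.sqrt_pos.mpr (by linarith)
  have hA3 : A ^ 3 ≤ (x * y / (x + y - 2)) ^ 3 :=
    pow_le_pow_left₀ hA.le (sq_div_le_mul_div hδ hx hy) 3
  rw [rpow_div_sqrt_mul_pow_eq (by linarith),
    show A ^ 3 * √(2 * δ) * (1 / √(x + y)) = A ^ 3 * (√(2 * δ) / √(x + y)) by ring]
  have hratio : √(2 * δ) / √(x + y) ≤ 1 :=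
    div_le_one_of_le₀ (Real.sqrt_le_sqrt (by linarith)) hsqrt.le
  refine ⟨(mul_le_of_le_one_right (by positivity) hratio).trans hA3, fun h => ?_, ?_⟩
  · by_contra hne
    have hratio_lt : √(2 * δ) / √(x + y) < 1 := by
      rw [div_lt_one hsqrt]
      exact Real.sqrt_lt_sqrt (by linarith) (by by_contra; exact hne ⟨by linarith, by linarith⟩)
    linarith [mul_lt_of_lt_one_right (pow_pos hA 3) hratio_lt]
  · rintro ⟨hx, hy⟩
    rw [hx, hy, show δ + δ = 2 * δ by ring] at hsqrt ⊢
    rw [div_self hsqrt.ne', mul_one, show δ * δ / (2 * δ - 2) = A by ring]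

end EdgeBound

variable (G : SimpleGraph V) [DecidableRel G.Adj]

theorem stmt16 (hδ : 2 ≤ G.minDegree) :
    (G.minDegree : ℝ) ^ ((13 : ℝ) / 2) / (Real.sqrt 32 * ((G.minDegree : ℝ) - 1) ^ 3) *
        sumConnIndex G ≤ augZagrebIndex G ∧
    ((G.minDegree : ℝ) ^ ((13 : ℝ) / 2) / (Real.sqrt 32 * ((G.minDegree : ℝ) - 1) ^ 3) *
        sumConnIndex G = augZagrebIndex G ↔
      G.IsRegularOfDegree G.minDegree) := by
  have hδ' : (2 : ℝ) ≤ G.minDegree := by exact_mod_cast hδ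
  have hdeg (v : V) : (G.minDegree : ℝ) ≤ G.degree v := by exact_mod_cast G.minDegree_le_degree v
  have hadj (v : V) : ∃ w, G.Adj v w :=
    (G.degree_pos_iff_exists_adj v).mp (by linarith [G.minDegree_le_degree v])
  have hedge (u v : V) := mul_one_div_sqrt_le_pow hδ' (hdeg u) (hdeg v)
  rw [sumConnIndex, augZagrebIndex, Finset.mul_sum]
  refine ⟨G.sum_edgeFinset_le fun u v _ => (hedge u v).1, ?_⟩
  rw [G.sum_edgeFinset_eq_iff (fun v => (G.degree v : ℝ) = G.minDegree) hadj
    (fun u v _ => (hedge u v).1) (fun u v _ => (hedge u v).2)]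
  exact forall_congr' fun v => Nat.cast_inj
end

section
/- Let G be a connected simple graph with n ≥ 3 vertices. Then (343√7/216) · R(G) ≤ AZI(G) ≤ ((n−1)⁷/(8(n−2)³)) · R(G), with equality on the left if and only if G is isomorphic to the star K_{1,7}, and equality on the right if and only if G is isomorphic to the complete graph Kₙ. -/
open Finset SimpleGraph

variable {V : Type*} [Fintype V] [DecidableEq V]

/-!
Write `d_u, d_v` for the end degrees of an edge and `s = d_u + d_v - 2`. The AZI-contribution of
the edge is `√ρ` times its Randić contribution, where `ρ = (d_u d_v)^7 / s^6`, so both bounds are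
edgewise bounds on `ρ`. From below, `d_u d_v ≥ s + 1` and weighted AM-GM gives
`(s + 1)^7 / s^6 ≥ 7^7 / 6^6`, with equality only for `s = 6` and a leaf end, i.e. degrees `{1, 7}`.
From above, `ρ` is increasing in each degree as long as the other one is at least `2`, and an edge
at a leaf is beaten by raising the leaf degree to `2`; so `ρ` is maximal at `d_u = d_v = n - 1`.
In a connected graph, all edges of type `{1, 7}` force a star `K_{1,7}`, and all edges of type
`{n - 1, n - 1}` force `K_n`.
-/

/-- The square of the ratio between the AZI- and the Randić-contribution of an edge whose ends
have degrees `x` and `y`. -/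
noncomputable def aziRandicRatio (x y : ℝ) : ℝ := (x * y) ^ 7 / (x + y - 2) ^ 6

lemma aziRandicRatio_comm (x y : ℝ) : aziRandicRatio x y = aziRandicRatio y x := by
  unfold aziRandicRatio; ring

lemma aziRandicRatio_nonneg {x y : ℝ} (hx : 0 ≤ x) (hy : 0 ≤ y) : 0 ≤ aziRandicRatio x y := by
  unfold aziRandicRatio; positivity

lemma sqrt_aziRandicRatio_one_seven : √(aziRandicRatio 1 7) = 343 * √7 / 216 := by
  rw [← Real.sqrt_sq (by positivity : (0 : ℝ) ≤ 343 * √7 / 216), div_pow, mul_pow,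
    Real.sq_sqrt (by norm_num)]
  norm_num [aziRandicRatio]

lemma sqrt_aziRandicRatio_sub_one {n : ℕ} (hn : 2 ≤ n) :
    √(aziRandicRatio ↑(n - 1) ↑(n - 1)) = ((n : ℝ) - 1) ^ 7 / (8 * ((n : ℝ) - 2) ^ 3) := by
  have hn' : (2 : ℝ) ≤ n := by exact_mod_cast hn
  rw [Nat.cast_sub (by omega), Nat.cast_one,
    ← Real.sqrt_sq (div_nonneg (pow_nonneg (by linarith) 7)
      (mul_nonneg (by norm_num) (pow_nonneg (by linarith) 3))),
    aziRandicRatio, div_pow]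
  ring_nf

lemma augZagrebTerm_eq {x y : ℝ} (hx : 0 < x) (hy : 0 < y) (hxy : 2 < x + y) :
    (x * y / (x + y - 2)) ^ 3 = √(aziRandicRatio x y) * (1 / √(x * y)) := by
  set q := √(x * y)
  have hsq : q ^ 2 = x * y := Real.sq_sqrt (mul_pos hx hy).le
  have hF : aziRandicRatio x y = (q ^ 7 / (x + y - 2) ^ 3) ^ 2 := by
    rw [aziRandicRatio, ← hsq, div_pow, ← pow_mul, ← pow_mul, ← pow_mul]
  rw [hF, Real.sqrt_sq (by positivity), ← hsq]
  field_simp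

section EdgeTerms

variable {x y c : ℝ} (hx : 0 < x) (hy : 0 < y) (hxy : 2 < x + y)
include hx hy hxy

lemma sqrt_mul_le_augZagrebTerm_iff :
    √c * (1 / √(x * y)) ≤ (x * y / (x + y - 2)) ^ 3 ↔ c ≤ aziRandicRatio x y := by
  rw [augZagrebTerm_eq hx hy hxy, mul_le_mul_iff_left₀ (by positivity),
    Real.sqrt_le_sqrt_iff (aziRandicRatio_nonneg hx.le hy.le)]

lemma augZagrebTerm_le_sqrt_mul_iff (hc : 0 ≤ c) :
    (x * y / (x + y - 2)) ^ 3 ≤ √c * (1 / √(x * y)) ↔ aziRandicRatio x y ≤ c := by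
  rw [augZagrebTerm_eq hx hy hxy, mul_le_mul_iff_left₀ (by positivity), Real.sqrt_le_sqrt_iff hc]

lemma sqrt_mul_eq_augZagrebTerm_iff (hc : 0 ≤ c) :
    √c * (1 / √(x * y)) = (x * y / (x + y - 2)) ^ 3 ↔ c = aziRandicRatio x y := by
  rw [augZagrebTerm_eq hx hy hxy, mul_left_inj' (by positivity),
    Real.sqrt_inj hc (aziRandicRatio_nonneg hx.le hy.le)]

end EdgeTerms

lemma seven_pow_seven_mul_pow_six_lt {s : ℝ} (hs : 0 < s) (h6 : s ≠ 6) :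
    7 ^ 7 * s ^ 6 < 6 ^ 6 * (s + 1) ^ 7 := by
  have key : 6 ^ 6 * (s + 1) ^ 7 - 7 ^ 7 * s ^ 6 = (s - 6) ^ 2 *
      (46656 * s ^ 5 + 62921 * s ^ 4 + 55212 * s ^ 3 + 30348 * s ^ 2 + 9504 * s + 1296) := by
    ring
  have h6' : s - 6 ≠ 0 := sub_ne_zero.2 h6
  have : 0 < (s - 6) ^ 2 *
      (46656 * s ^ 5 + 62921 * s ^ 4 + 55212 * s ^ 3 + 30348 * s ^ 2 + 9504 * s + 1296) := by
    positivity
  linarith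

lemma aziRandicRatio_one_seven_lt {x y : ℝ} (hx : 1 ≤ x) (hy : 1 ≤ y) (hxy : 2 < x + y)
    (hne : ¬((x = 1 ∧ y = 7) ∨ (x = 7 ∧ y = 1))) :
    aziRandicRatio 1 7 < aziRandicRatio x y := by
  set s := x + y - 2
  have hs : 0 < s := by linarith
  have hP : s + 1 ≤ x * y := by nlinarith
  suffices h : 7 ^ 7 * s ^ 6 < 6 ^ 6 * (x * y) ^ 7 by
    rw [aziRandicRatio, aziRandicRatio, div_lt_div_iff₀ (by norm_num) (by positivity)]
    norm_num at h ⊢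
    linarith
  by_cases h6 : s = 6
  · have hP' : s + 1 < x * y := by
      refine hP.lt_of_ne fun h => hne ?_
      rcases mul_eq_zero.1 (by linarith : (x - 1) * (y - 1) = 0) with h | h
      · exact Or.inl ⟨by linarith, by linarith⟩
      · exact Or.inr ⟨by linarith, by linarith⟩
    calc 7 ^ 7 * s ^ 6 = 6 ^ 6 * (s + 1) ^ 7 := by rw [h6]; norm_num
      _ < 6 ^ 6 * (x * y) ^ 7 := by gcongr
  · calc 7 ^ 7 * s ^ 6 < 6 ^ 6 * (s + 1) ^ 7 := seven_pow_seven_mul_pow_six_lt hs h6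
      _ ≤ 6 ^ 6 * (x * y) ^ 7 := by gcongr

lemma aziRandicRatio_one_seven_le {x y : ℝ} (hx : 1 ≤ x) (hy : 1 ≤ y) (hxy : 2 < x + y) :
    aziRandicRatio 1 7 ≤ aziRandicRatio x y := by
  by_cases h : (x = 1 ∧ y = 7) ∨ (x = 7 ∧ y = 1)
  · rcases h with ⟨rfl, rfl⟩ | ⟨rfl, rfl⟩
    exacts [le_rfl, (aziRandicRatio_comm 7 1).ge]
  · exact (aziRandicRatio_one_seven_lt hx hy hxy h).le

lemma aziRandicRatio_eq_one_seven_iff {x y : ℝ} (hx : 1 ≤ x) (hy : 1 ≤ y) (hxy : 2 < x + y) :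
    aziRandicRatio x y = aziRandicRatio 1 7 ↔ (x = 1 ∧ y = 7) ∨ (x = 7 ∧ y = 1) := by
  refine ⟨fun h => ?_, ?_⟩
  · by_contra hne
    exact (aziRandicRatio_one_seven_lt hx hy hxy hne).ne' h
  · rintro (⟨rfl, rfl⟩ | ⟨rfl, rfl⟩)
    exacts [rfl, aziRandicRatio_comm 7 1]

/-- `t ^ 7 / (t + c) ^ 6 = t * (t / (t + c)) ^ 6` is a product of increasing positive factors. -/
lemma pow_seven_div_pow_six_strictMonoOn {c : ℝ} (hc : 0 ≤ c) :
    StrictMonoOn (fun t : ℝ => t ^ 7 / (t + c) ^ 6) (Set.Ioi 0) := by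
  intro a ha b hb hab
  simp only [Set.mem_Ioi] at ha hb
  rw [div_lt_div_iff₀ (by positivity) (by positivity)]
  have h : a * (b + c) ≤ b * (a + c) := by nlinarith
  calc a ^ 7 * (b + c) ^ 6 = a * (a * (b + c)) ^ 6 := by ring
    _ ≤ a * (b * (a + c)) ^ 6 := by gcongr
    _ < b * (b * (a + c)) ^ 6 := by gcongr
    _ = b ^ 7 * (a + c) ^ 6 := by ring

lemma aziRandicRatio_strictMonoOn_left {y : ℝ} (hy : 2 ≤ y) :
    StrictMonoOn (fun x => aziRandicRatio x y) (Set.Ioi 0) := by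
  intro a ha b hb hab
  have h := pow_seven_div_pow_six_strictMonoOn (sub_nonneg.2 hy) ha hb hab
  simp only [aziRandicRatio, mul_pow, add_sub_assoc] at h ⊢
  rw [mul_comm (a ^ 7), mul_comm (b ^ 7), mul_div_assoc, mul_div_assoc]
  exact mul_lt_mul_of_pos_left h (by positivity)

lemma aziRandicRatio_one_lt_aziRandicRatio_two {x : ℝ} (hx : 2 ≤ x) :
    aziRandicRatio x 1 < aziRandicRatio x 2 := by
  unfold aziRandicRatio
  rw [div_lt_div_iff₀ (pow_pos (by linarith) 6) (pow_pos (by linarith) 6)]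
  have h : x ^ 6 ≤ 64 * (x - 1) ^ 6 := by
    calc x ^ 6 ≤ (2 * (x - 1)) ^ 6 := by gcongr; linarith
      _ = 64 * (x - 1) ^ 6 := by ring
  have : 0 < (x - 1) ^ 6 := pow_pos (by linarith) 6
  calc (x * 1) ^ 7 * (x + 2 - 2) ^ 6 = x ^ 7 * x ^ 6 := by ring
    _ < x ^ 7 * (128 * (x - 1) ^ 6) := by gcongr; linarith
    _ = (x * 2) ^ 7 * (x + 1 - 2) ^ 6 := by ring

lemma aziRandicRatio_le_self_of_two_le {x y m : ℝ} (hx : 0 < x) (hxm : x ≤ m) (hy : 2 ≤ y)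
    (hym : y ≤ m) :
    aziRandicRatio x y ≤ aziRandicRatio m m ∧
      (x < m ∨ y < m → aziRandicRatio x y < aziRandicRatio m m) := by
  have hmono_x := aziRandicRatio_strictMonoOn_left hy
  have hmono_y := aziRandicRatio_strictMonoOn_left (hy.trans hym)
  have hx' : x ∈ Set.Ioi 0 := hx
  have hy' : y ∈ Set.Ioi 0 := by simp only [Set.mem_Ioi]; linarith
  have hm : m ∈ Set.Ioi 0 := by simp only [Set.mem_Ioi]; linarith
  have h1 : aziRandicRatio x y ≤ aziRandicRatio y m := by
    rw [aziRandicRatio_comm y]; exact (hmono_x.le_iff_le hx' hm).2 hxm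
  have h2 : aziRandicRatio y m ≤ aziRandicRatio m m := (hmono_y.le_iff_le hy' hm).2 hym
  refine ⟨h1.trans h2, ?_⟩
  rintro (h | h)
  · rw [aziRandicRatio_comm y] at h1 h2
    exact ((hmono_x.lt_iff_lt hx' hm).2 h).trans_le h2
  · exact h1.trans_lt ((hmono_y.lt_iff_lt hy' hm).2 h)

lemma aziRandicRatio_lt_self {x y m : ℕ} (hx : 0 < x) (hy : 0 < y) (hxm : x ≤ m) (hym : y ≤ m)
    (hxy : 3 ≤ x + y) (hne : ¬(x = m ∧ y = m)) :
    aziRandicRatio x y < aziRandicRatio m m := by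
  rcases Nat.lt_or_ge y 2 with hy1 | hy2
  · obtain rfl : y = 1 := by omega
    have hx2 : (2 : ℝ) ≤ x := by exact_mod_cast (by omega : 2 ≤ x)
    calc aziRandicRatio x (1 : ℕ) = aziRandicRatio x 1 := by norm_num
      _ < aziRandicRatio x 2 := aziRandicRatio_one_lt_aziRandicRatio_two hx2
      _ ≤ aziRandicRatio m m :=
        (aziRandicRatio_le_self_of_two_le (by linarith) (by exact_mod_cast hxm) le_rfl
          (by exact_mod_cast (by omega : 2 ≤ m))).1
  · exact (aziRandicRatio_le_self_of_two_le (by exact_mod_cast hx) (by exact_mod_cast hxm)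
      (by exact_mod_cast hy2) (by exact_mod_cast hym)).2
      (by exact_mod_cast (by omega : x < m ∨ y < m))

lemma aziRandicRatio_le_self {x y m : ℕ} (hx : 0 < x) (hy : 0 < y) (hxm : x ≤ m)
    (hym : y ≤ m) (hxy : 3 ≤ x + y) : aziRandicRatio x y ≤ aziRandicRatio m m := by
  by_cases h : x = m ∧ y = m
  · rw [h.1, h.2]
  · exact (aziRandicRatio_lt_self hx hy hxm hym hxy h).le

lemma aziRandicRatio_eq_self_iff {x y m : ℕ} (hx : 0 < x) (hy : 0 < y) (hxm : x ≤ m)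
    (hym : y ≤ m) (hxy : 3 ≤ x + y) :
    aziRandicRatio x y = aziRandicRatio m m ↔ x = m ∧ y = m := by
  refine ⟨fun h => ?_, fun h => by rw [h.1, h.2]⟩
  by_contra hne
  exact (aziRandicRatio_lt_self hx hy hxm hym hxy hne).ne h

omit [Fintype V] [DecidableEq V] in
lemma SimpleGraph.Reachable.mem_of_adj_closed {G : SimpleGraph V} {S : Set V}
    (hS : ∀ ⦃a b⦄, a ∈ S → G.Adj a b → b ∈ S) {u v : V} (h : G.Reachable u v) (hu : u ∈ S) :
    v ∈ S := by
  obtain ⟨p⟩ := h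
  induction p with
  | nil => exact hu
  | cons hadj _ ih => exact ih (hS hu hadj)

lemma nonempty_starGraph_iso_completeBipartiteGraph {k : ℕ} (r : V)
    (hV : Fintype.card V = k + 1) :
    Nonempty (starGraph r ≃g completeBipartiteGraph (Fin 1) (Fin k)) := by
  have h1 : Fintype.card {x // x = r} = 1 := Fintype.card_subtype_eq r
  have hk : Fintype.card {x // ¬x = r} = k := by
    rw [Fintype.card_subtype_compl, h1, hV, Nat.add_sub_cancel]
  let split : starGraph r ≃g completeBipartiteGraph {x // x = r} {x // ¬x = r} :=
    ⟨(Equiv.sumCompl (· = r)).symm, fun {a b} => by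
      by_cases ha : a = r <;> by_cases hb : b = r <;>
        simp [Equiv.sumCompl_symm_apply_of_pos, Equiv.sumCompl_symm_apply_of_neg, ha, hb, Ne.symm]⟩
  exact ⟨split.trans (completeBipartiteGraphCongr (Fintype.equivFinOfCardEq h1)
    (Fintype.equivFinOfCardEq hk))⟩

section Graph

variable {G : SimpleGraph V} [DecidableRel G.Adj]

omit [DecidableEq V] in
lemma forall_mem_edgeFinset_iff {p : Sym2 V → Prop} :
    (∀ e ∈ G.edgeFinset, p e) ↔ ∀ u v, G.Adj u v → p s(u, v) := by
  simp only [mem_edgeFinset, Sym2.forall, mem_edgeSet]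

omit [DecidableEq V] in
lemma sum_edgeFinset_le_sum {f g : Sym2 V → ℝ} (h : ∀ u v, G.Adj u v → f s(u, v) ≤ g s(u, v)) :
    ∑ e ∈ G.edgeFinset, f e ≤ ∑ e ∈ G.edgeFinset, g e :=
  sum_le_sum (forall_mem_edgeFinset_iff.2 h)

omit [DecidableEq V] in
lemma sum_edgeFinset_eq_sum_iff {f g : Sym2 V → ℝ}
    (h : ∀ u v, G.Adj u v → f s(u, v) ≤ g s(u, v)) :
    ∑ e ∈ G.edgeFinset, f e = ∑ e ∈ G.edgeFinset, g e ↔ ∀ u v, G.Adj u v → f s(u, v) = g s(u, v) :=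
  (sum_eq_sum_iff_of_le (forall_mem_edgeFinset_iff.2 h)).trans forall_mem_edgeFinset_iff

lemma SimpleGraph.Connected.three_le_degree_add_degree_s17 (hG : G.Connected)
    (hV : 3 ≤ Fintype.card V) {u v : V} (huv : G.Adj u v) : 3 ≤ G.degree u + G.degree v := by
  by_contra! hlt
  have hu0 := huv.degree_pos_left
  have hv0 := huv.symm.degree_pos_left
  have hu : G.degree u = 1 := by omega
  have hv : G.degree v = 1 := by omega
  have hclosed : ∀ ⦃a b⦄, a ∈ ({u, v} : Set V) → G.Adj a b → b ∈ ({u, v} : Set V) := by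
    rintro a b (rfl | rfl) hab
    · exact Or.inr ((degree_eq_one_iff_existsUnique_adj.1 hu).unique hab huv)
    · exact Or.inl ((degree_eq_one_iff_existsUnique_adj.1 hv).unique hab huv.symm)
  have hsub : (univ : Finset V) ⊆ {u, v} := fun w _ => by
    simpa using (hG u w).mem_of_adj_closed hclosed (Set.mem_insert u _)
  have := (card_le_card hsub).trans card_le_two
  rw [card_univ] at this
  omega

lemma SimpleGraph.Connected.eq_starGraph (hG : G.Connected) {c : V}
    (hleaf : ∀ a, G.Adj c a → G.degree a = 1) : G = starGraph c := by
  have hback : ∀ a, G.Adj c a → ∀ b, G.Adj a b → b = c := fun a hca b hab =>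
    (degree_eq_one_iff_existsUnique_adj.1 (hleaf a hca)).unique hab hca.symm
  have hclosed : ∀ ⦃a b⦄, a ∈ {w | w = c ∨ G.Adj c w} → G.Adj a b →
      b ∈ {w | w = c ∨ G.Adj c w} := by
    rintro a b (rfl | hca) hab
    exacts [Or.inr hab, Or.inl (hback a hca b hab)]
  have huniv : G.IsUniversal c := fun w hw =>
    ((hG c w).mem_of_adj_closed hclosed (Or.inl rfl)).resolve_left (Ne.symm hw)
  ext a b
  rw [starGraph_adj]
  constructor
  · intro hab
    refine ⟨hab.ne, ?_⟩
    by_cases hac : a = c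
    · exact Or.inl hac
    · exact Or.inr (hback a (huniv (Ne.symm hac)) b hab)
  · rintro ⟨hab, rfl | rfl⟩
    exacts [huniv hab, (huniv (Ne.symm hab)).symm]

lemma forall_adj_degree_eq_one_or_iff_nonempty_iso_completeBipartiteGraph [Nontrivial V]
    (hG : G.Connected) (k : ℕ) :
    (∀ u v, G.Adj u v →
      (G.degree u = 1 ∧ G.degree v = k) ∨ (G.degree u = k ∧ G.degree v = 1)) ↔
      Nonempty (G ≃g completeBipartiteGraph (Fin 1) (Fin k)) := by
  constructor
  · intro hdeg
    obtain ⟨u, v, huv⟩ : ∃ u v, G.Adj u v := by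
      obtain ⟨u⟩ := ‹Nontrivial V›.to_nonempty
      exact ⟨u, (G.degree_pos_iff_exists_adj u).1 (hG.preconnected.degree_pos_of_nontrivial u)⟩
    obtain ⟨c, hc⟩ : ∃ c, G.degree c = k :=
      (hdeg u v huv).elim (fun h => ⟨v, h.2⟩) (fun h => ⟨u, h.1⟩)
    have hstar := hG.eq_starGraph fun a hca => by rcases hdeg c a hca with h | h <;> omega
    have hcard : Fintype.card V = k + 1 := by
      have := (G.degree_eq_card_sub_one c).2 (by rw [hstar]; exact isUniversal_starGraph_self)
      have := Fintype.card_pos (α := V)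
      omega
    subst hstar
    exact nonempty_starGraph_iso_completeBipartiteGraph c hcard
  · rintro ⟨φ⟩ u v huv
    obtain ⟨ψ⟩ := nonempty_starGraph_iso_completeBipartiteGraph (k := k) (Sum.inl 0 : Fin 1 ⊕ Fin k)
      (by rw [Fintype.card_sum, Fintype.card_fin, Fintype.card_fin, add_comm])
    set χ := φ.trans ψ.symm
    have hadj := χ.map_rel_iff.2 huv
    rw [← Iso.degree_eq χ u, ← Iso.degree_eq χ v]
    rw [starGraph_adj] at hadj
    rcases hadj with ⟨hne, h | h⟩
    · right
      rw [h, degree_starGraph_center, degree_starGraph_of_ne_center fun hv => hne (h.trans hv.symm)]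
      simp
    · left
      rw [h, degree_starGraph_center, degree_starGraph_of_ne_center fun hu => hne (hu.trans h.symm)]
      simp

omit [DecidableEq V] in
lemma forall_adj_degree_eq_iff_nonempty_iso_completeGraph [Nontrivial V] (hG : G.Connected)
    {n : ℕ} (hn : Fintype.card V = n) :
    (∀ u v, G.Adj u v → G.degree u = n - 1 ∧ G.degree v = n - 1) ↔
      Nonempty (G ≃g completeGraph (Fin n)) := by
  constructor
  · intro hdeg
    have htop : G = ⊤ := by
      refine G.eq_top_iff_forall_isUniversal.2 fun u => ?_
      obtain ⟨v, huv⟩ := (G.degree_pos_iff_exists_adj u).1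
        (hG.preconnected.degree_pos_of_nontrivial u)
      exact (G.degree_eq_card_sub_one u).1 (hn ▸ (hdeg u v huv).1)
    subst htop
    exact ⟨Iso.completeGraph (Fintype.equivFinOfCardEq hn)⟩
  · rintro ⟨φ⟩ u v -
    rw [← Iso.degree_eq φ u, ← Iso.degree_eq φ v]
    simp only [complete_graph_degree, Fintype.card_fin, and_self]

section Indices

variable (hG : G.Connected) (hV : 3 ≤ Fintype.card V) {c : ℝ}
include hG hV

lemma SimpleGraph.Connected.cast_degree_pos_and_two_lt {u v : V} (huv : G.Adj u v) :
    (0 : ℝ) < G.degree u ∧ (0 : ℝ) < G.degree v ∧ (2 : ℝ) < G.degree u + G.degree v :=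
  ⟨Nat.cast_pos.2 huv.degree_pos_left, Nat.cast_pos.2 huv.symm.degree_pos_left,
    by exact_mod_cast hG.three_le_degree_add_degree_s17 hV huv⟩

lemma SimpleGraph.Connected.aziRandicRatio_one_seven_le_degree {u v : V} (huv : G.Adj u v) :
    aziRandicRatio 1 7 ≤ aziRandicRatio (G.degree u) (G.degree v) :=
  aziRandicRatio_one_seven_le (Nat.one_le_cast.2 huv.degree_pos_left)
    (Nat.one_le_cast.2 huv.symm.degree_pos_left) (hG.cast_degree_pos_and_two_lt hV huv).2.2

lemma SimpleGraph.Connected.aziRandicRatio_degree_eq_one_seven_iff {u v : V} (huv : G.Adj u v) :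
    aziRandicRatio (G.degree u) (G.degree v) = aziRandicRatio 1 7 ↔
      (G.degree u = 1 ∧ G.degree v = 7) ∨ (G.degree u = 7 ∧ G.degree v = 1) := by
  rw [aziRandicRatio_eq_one_seven_iff (Nat.one_le_cast.2 huv.degree_pos_left)
    (Nat.one_le_cast.2 huv.symm.degree_pos_left) (hG.cast_degree_pos_and_two_lt hV huv).2.2]
  norm_cast

lemma SimpleGraph.Connected.aziRandicRatio_degree_le_card_sub_one {u v : V} (huv : G.Adj u v) :
    aziRandicRatio (G.degree u) (G.degree v) ≤
      aziRandicRatio ↑(Fintype.card V - 1) ↑(Fintype.card V - 1) :=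
  aziRandicRatio_le_self huv.degree_pos_left huv.symm.degree_pos_left
    (Nat.le_sub_one_of_lt (G.degree_lt_card_verts u))
    (Nat.le_sub_one_of_lt (G.degree_lt_card_verts v))
    (hG.three_le_degree_add_degree_s17 hV huv)

lemma SimpleGraph.Connected.aziRandicRatio_degree_eq_card_sub_one_iff {u v : V} (huv : G.Adj u v) :
    aziRandicRatio (G.degree u) (G.degree v) =
        aziRandicRatio ↑(Fintype.card V - 1) ↑(Fintype.card V - 1) ↔
      G.degree u = Fintype.card V - 1 ∧ G.degree v = Fintype.card V - 1 :=
  aziRandicRatio_eq_self_iff huv.degree_pos_left huv.symm.degree_pos_left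
    (Nat.le_sub_one_of_lt (G.degree_lt_card_verts u))
    (Nat.le_sub_one_of_lt (G.degree_lt_card_verts v))
    (hG.three_le_degree_add_degree_s17 hV huv)

lemma sqrt_mul_randicIndex_le_augZagrebIndex
    (hc : ∀ u v, G.Adj u v → c ≤ aziRandicRatio (G.degree u) (G.degree v)) :
    √c * randicIndex G ≤ augZagrebIndex G := by
  rw [randicIndex, augZagrebIndex, mul_sum]
  refine sum_edgeFinset_le_sum fun u v huv => ?_
  obtain ⟨hu, hv, h2⟩ := hG.cast_degree_pos_and_two_lt hV huv
  exact (sqrt_mul_le_augZagrebTerm_iff hu hv h2).2 (hc u v huv)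

lemma sqrt_mul_randicIndex_eq_augZagrebIndex_iff (hc0 : 0 ≤ c)
    (hc : ∀ u v, G.Adj u v → c ≤ aziRandicRatio (G.degree u) (G.degree v)) :
    √c * randicIndex G = augZagrebIndex G ↔
      ∀ u v, G.Adj u v → aziRandicRatio (G.degree u) (G.degree v) = c := by
  rw [randicIndex, augZagrebIndex, mul_sum, sum_edgeFinset_eq_sum_iff fun u v huv => by
    obtain ⟨hu, hv, h2⟩ := hG.cast_degree_pos_and_two_lt hV huv
    exact (sqrt_mul_le_augZagrebTerm_iff hu hv h2).2 (hc u v huv)]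
  refine forall₂_congr fun u v => forall_congr' fun huv => ?_
  obtain ⟨hu, hv, h2⟩ := hG.cast_degree_pos_and_two_lt hV huv
  exact (sqrt_mul_eq_augZagrebTerm_iff hu hv h2 hc0).trans eq_comm

lemma augZagrebIndex_le_sqrt_mul_randicIndex (hc0 : 0 ≤ c)
    (hc : ∀ u v, G.Adj u v → aziRandicRatio (G.degree u) (G.degree v) ≤ c) :
    augZagrebIndex G ≤ √c * randicIndex G := by
  rw [randicIndex, augZagrebIndex, mul_sum]
  refine sum_edgeFinset_le_sum fun u v huv => ?_
  obtain ⟨hu, hv, h2⟩ := hG.cast_degree_pos_and_two_lt hV huv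
  exact (augZagrebTerm_le_sqrt_mul_iff hu hv h2 hc0).2 (hc u v huv)

lemma augZagrebIndex_eq_sqrt_mul_randicIndex_iff (hc0 : 0 ≤ c)
    (hc : ∀ u v, G.Adj u v → aziRandicRatio (G.degree u) (G.degree v) ≤ c) :
    augZagrebIndex G = √c * randicIndex G ↔
      ∀ u v, G.Adj u v → aziRandicRatio (G.degree u) (G.degree v) = c := by
  rw [randicIndex, augZagrebIndex, mul_sum, sum_edgeFinset_eq_sum_iff fun u v huv => by
    obtain ⟨hu, hv, h2⟩ := hG.cast_degree_pos_and_two_lt hV huv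
    exact (augZagrebTerm_le_sqrt_mul_iff hu hv h2 hc0).2 (hc u v huv)]
  refine forall₂_congr fun u v => forall_congr' fun huv => ?_
  obtain ⟨hu, hv, h2⟩ := hG.cast_degree_pos_and_two_lt hV huv
  exact eq_comm.trans ((sqrt_mul_eq_augZagrebTerm_iff hu hv h2 hc0).trans eq_comm)

end Indices

end Graph

variable (G : SimpleGraph V) [DecidableRel G.Adj]

theorem stmt17 (hG : G.Connected) (n : ℕ) (hn : Fintype.card V = n) (hn3 : 3 ≤ n) :
    343 * Real.sqrt 7 / 216 * randicIndex G ≤ augZagrebIndex G ∧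
    augZagrebIndex G ≤ ((n : ℝ) - 1) ^ 7 / (8 * ((n : ℝ) - 2) ^ 3) * randicIndex G ∧
    (343 * Real.sqrt 7 / 216 * randicIndex G = augZagrebIndex G ↔
      Nonempty (G ≃g completeBipartiteGraph (Fin 1) (Fin 7))) ∧
    (augZagrebIndex G = ((n : ℝ) - 1) ^ 7 / (8 * ((n : ℝ) - 2) ^ 3) * randicIndex G ↔
      Nonempty (G ≃g completeGraph (Fin n))) := by
  subst hn
  have : Nontrivial V := Fintype.one_lt_card_iff_nontrivial.1 (by omega)
  have hlow0 : 0 ≤ aziRandicRatio 1 7 := aziRandicRatio_nonneg zero_le_one (by norm_num)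
  have hup0 : 0 ≤ aziRandicRatio ↑(Fintype.card V - 1) ↑(Fintype.card V - 1) :=
    aziRandicRatio_nonneg (Nat.cast_nonneg _) (Nat.cast_nonneg _)
  have hlow : ∀ u v, G.Adj u v → _ := fun _ _ => hG.aziRandicRatio_one_seven_le_degree hn3
  have hup : ∀ u v, G.Adj u v → _ := fun _ _ => hG.aziRandicRatio_degree_le_card_sub_one hn3
  rw [← sqrt_aziRandicRatio_one_seven, ← sqrt_aziRandicRatio_sub_one (by omega)]
  refine ⟨sqrt_mul_randicIndex_le_augZagrebIndex hG hn3 hlow,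
    augZagrebIndex_le_sqrt_mul_randicIndex hG hn3 hup0 hup, ?_, ?_⟩
  · rw [sqrt_mul_randicIndex_eq_augZagrebIndex_iff hG hn3 hlow0 hlow,
      ← forall_adj_degree_eq_one_or_iff_nonempty_iso_completeBipartiteGraph hG 7]
    exact forall₂_congr fun u v => forall_congr' (hG.aziRandicRatio_degree_eq_one_seven_iff hn3)
  · rw [augZagrebIndex_eq_sqrt_mul_randicIndex_iff hG hn3 hup0 hup,
      ← forall_adj_degree_eq_iff_nonempty_iso_completeGraph hG rfl]
    exact forall₂_congr fun u v => forall_congr' (hG.aziRandicRatio_degree_eq_card_sub_one_iff hn3)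
end
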